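/- Let X be a nonempty finite type, T ≥ 1, r : X → ℝ, α > 0, and p^pre a positive pretrained policy sequence with soft value functions v_t and soft-optimal policy sequence p*. Then for every positive policy sequence p^θ and every initial distribution μ on X, J(p^θ) := E_{P^{p^θ}_μ}[r(x_0)] − α · Σ_{t=1}^{T} E_{P^{p^θ}_μ}[KL(p^θ_{t-1}(·|x_t) ‖ p^pre_{t-1}(·|x_t))] = Σ_{x_T} μ(x_T) v_T(x_T) − α · KL(P^{p^θ}_μ ‖ P^{p*}_μ), where the last KL divergence is between the two joint trajectory distributions on X^{T+1}. -/

import Mathlib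

/-!
Telescoping the soft values along a trajectory gives
`P*_μ(x) = P^pre_μ(x) · exp((r(x_0) − v_T(x_T))/α)`, hence
`α · KL(P^θ_μ ‖ P*_μ) = α · KL(P^θ_μ ‖ P^pre_μ) − E[r(x_0)] + E[v_T(x_T)]`.
The chain rule for the KL divergence of two Markov chains with the same initial law turns
`KL(P^θ_μ ‖ P^pre_μ)` into the sum over `t` of the expected one-step divergences
`E[KL(p^θ_{t-1}(·|x_t) ‖ p^pre_{t-1}(·|x_t))]`: conditioned on `x_t`, the state `x_{t-1}` has law
`p^θ_{t-1}(·|x_t)`. Finally `x_T ∼ μ`, so `E[v_T(x_T)] = ∑ μ v_T`.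
-/

open Real

/-- KL divergence between two mass functions on a finite type, with the
convention `0 * log 0 = 0` (automatic, since `0 * _ = 0` in `ℝ`). -/
noncomputable def KLd {Y : Type*} [Fintype Y] (p q : Y → ℝ) : ℝ :=
  ∑ y, p y * Real.log (p y / q y)

/-- Product of transition probabilities along a trajectory `(x_{t-1}, …, x_0)`
(encoded as `y : Fin t → X`, with `y i = x_i`) starting from `x_t = x`:
`∏_{s=t}^{1} p_{s-1}(x_{s-1} | x_s)`. -/
noncomputable def chainProd {X : Type*} (p : ℕ → X → X → ℝ) (t : ℕ) (x : X)
    (y : Fin t → X) : ℝ :=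
  ∏ s : Fin t, p s (if h : (s : ℕ) + 1 < t then y ⟨(s : ℕ) + 1, h⟩ else x) (y s)

/-- The soft value functions: `v_0 = r` and, for `t ≥ 1`,
`v_t(x) = α * log ∑_{x_{t-1},…,x_0} (∏_{s=t}^{1} p_{s-1}(x_{s-1}|x_s)) exp(r(x_0)/α)`. -/
noncomputable def softValue {X : Type*} [Fintype X] (p : ℕ → X → X → ℝ) (r : X → ℝ)
    (α : ℝ) : ℕ → X → ℝ
  | 0, x => r x
  | (t + 1), x =>
      α * Real.log (∑ y : Fin (t + 1) → X,
        chainProd p (t + 1) x y * Real.exp (r (y 0) / α))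

/-- The soft-optimal policy
`p*_{t-1}(y|x) = p^pre_{t-1}(y|x) * exp(v_{t-1}(y)/α) / exp(v_t(x)/α)`.
The index `t : ℕ` here stands for `t-1`, so it uses `v_t` and `v_{t+1}`. -/
noncomputable def softOpt {X : Type*} [Fintype X] (p : ℕ → X → X → ℝ) (r : X → ℝ)
    (α : ℝ) (t : ℕ) (x y : X) : ℝ :=
  p t x y * Real.exp (softValue p r α t y / α) / Real.exp (softValue p r α (t + 1) x / α)

/-- The joint trajectory distribution
`P^q_μ(x_T,…,x_0) = μ(x_T) * ∏_{t=T}^{1} q_{t-1}(x_{t-1}|x_t)`, a trajectory being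
encoded as `x : Fin (T+1) → X` with `x i = x_i` (so `x (Fin.last T) = x_T`). -/
noncomputable def trajProb {X : Type*} (μ : X → ℝ) (q : ℕ → X → X → ℝ) (T : ℕ)
    (x : Fin (T + 1) → X) : ℝ :=
  μ (x (Fin.last T)) * ∏ t : Fin T, q t (x t.succ) (x t.castSucc)

/-- Expectation of `f` under the joint trajectory distribution `P^q_μ`. -/
noncomputable def trajExp {X : Type*} [Fintype X] (μ : X → ℝ) (q : ℕ → X → X → ℝ)
    (T : ℕ) (f : (Fin (T + 1) → X) → ℝ) : ℝ :=
  ∑ x : Fin (T + 1) → X, trajProb μ q T x * f x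

/-- `q` is a policy sequence for horizon `T`: for each `t < T` (our index `t`
stands for `t-1` with `1 ≤ t ≤ T`), `q t x ·` is a probability mass function. -/
def IsPolicy {X : Type*} [Fintype X] (T : ℕ) (q : ℕ → X → X → ℝ) : Prop :=
  ∀ t < T, ∀ x : X, (∀ y : X, 0 ≤ q t x y) ∧ (∑ y, q t x y) = 1

/-- A policy sequence is positive if all its transition probabilities are positive. -/
def IsPositive {X : Type*} (T : ℕ) (q : ℕ → X → X → ℝ) : Prop :=
  ∀ t < T, ∀ x y : X, 0 < q t x y

open Finset

theorem KLd_mul_exp {Y : Type*} [Fintype Y] {p q : Y → ℝ} (hq : ∀ y, p y ≠ 0 → q y ≠ 0)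
    (h : Y → ℝ) : KLd p (fun y => q y * Real.exp (h y)) = KLd p q - ∑ y, p y * h y := by
  rw [KLd, KLd, ← sum_sub_distrib]
  refine sum_congr rfl fun y _ => ?_
  by_cases hy : p y = 0
  · simp [hy]
  · rw [← div_div, Real.log_div (div_ne_zero hy (hq y hy)) (Real.exp_ne_zero _), Real.log_exp]
    ring

theorem Fin.sum_univ_castSucc_sub_succ {M : Type*} [AddCommGroup M] :
    ∀ {n : ℕ} (f : Fin (n + 1) → M), ∑ i : Fin n, (f i.castSucc - f i.succ) = f 0 - f (Fin.last n)
  | 0, _ => by simp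
  | n + 1, f => by
    rw [Fin.sum_univ_castSucc]
    simp only [Fin.succ_castSucc]
    rw [Fin.sum_univ_castSucc_sub_succ fun i => f i.castSucc, Fin.succ_last, Fin.castSucc_zero]
    abel

section Trajectories

variable {X : Type*}

lemma trajProb_snoc (ν : X → ℝ) (q : ℕ → X → X → ℝ) (n : ℕ) (y : Fin (n + 1) → X) (a : X) :
    trajProb ν q (n + 1) (Fin.snoc y a) = trajProb (fun b => ν a * q n a b) q n y := by
  simp only [trajProb, Fin.prod_univ_castSucc (n := n), Fin.snoc_last, Fin.succ_last,
    Fin.snoc_castSucc, Fin.succ_castSucc, Fin.val_castSucc, Fin.val_last]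
  ring

lemma trajProb_tilt (ν : X → ℝ) (p : ℕ → X → X → ℝ) (w : ℕ → X → ℝ) (n : ℕ)
    (x : Fin (n + 1) → X) :
    trajProb ν (fun t a b => p t a b * Real.exp (w t b) / Real.exp (w (t + 1) a)) n x
      = trajProb ν p n x * Real.exp (w 0 (x 0) - w n (x (Fin.last n))) := by
  have htelescope := Fin.sum_univ_castSucc_sub_succ fun i : Fin (n + 1) => w i (x i)
  simp only [Fin.val_castSucc, Fin.val_succ, Fin.val_zero, Fin.val_last] at htelescope
  simp only [trajProb, mul_div_assoc, ← Real.exp_sub, prod_mul_distrib, ← Real.exp_sum,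
    htelescope, mul_assoc]

lemma trajProb_ne_zero_of_trajProb_ne_zero {ν : X → ℝ} {p q : ℕ → X → X → ℝ} {n : ℕ}
    (hp : ∀ t < n, ∀ a b, p t a b ≠ 0) {x : Fin (n + 1) → X} (hx : trajProb ν q n x ≠ 0) :
    trajProb ν p n x ≠ 0 :=
  mul_ne_zero (left_ne_zero_of_mul hx) (prod_ne_zero_iff.2 fun t _ => hp t t.2 _ _)

lemma log_trajProb_div {ν : X → ℝ} {p q : ℕ → X → X → ℝ} {n : ℕ}
    (hp : ∀ t < n, ∀ a b, p t a b ≠ 0) {x : Fin (n + 1) → X} (hx : trajProb ν q n x ≠ 0) :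
    Real.log (trajProb ν q n x / trajProb ν p n x)
      = ∑ t : Fin n, Real.log (q t (x t.succ) (x t.castSucc) / p t (x t.succ) (x t.castSucc)) := by
  have hq := prod_ne_zero_iff.1 (right_ne_zero_of_mul hx)
  rw [trajProb, trajProb, mul_div_mul_left _ _ (left_ne_zero_of_mul hx), ← prod_div_distrib,
    Real.log_prod fun t _ => div_ne_zero (hq t (mem_univ t)) (hp t t.2 _ _)]

variable [Fintype X]

lemma trajProb_softOpt (μ : X → ℝ) (p : ℕ → X → X → ℝ) (r : X → ℝ)
    (α : ℝ) (T : ℕ) (x : Fin (T + 1) → X) :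
    trajProb μ (softOpt p r α) T x
      = trajProb μ p T x * Real.exp ((r (x 0) - softValue p r α T (x (Fin.last T))) / α) := by
  rw [sub_div]
  exact trajProb_tilt μ p (fun t y => softValue p r α t y / α) T x

lemma trajExp_succ (ν : X → ℝ) (q : ℕ → X → X → ℝ) (n : ℕ) (F : (Fin (n + 1 + 1) → X) → ℝ) :
    trajExp ν q (n + 1) F
      = ∑ a, trajExp (fun b => ν a * q n a b) q n fun y => F (Fin.snoc y a) := by
  rw [trajExp, ← (Fin.snocEquiv fun _ => X).sum_comp, Fintype.sum_prod_type]
  exact sum_congr rfl fun a _ => sum_congr rfl fun y _ => by rw [← trajProb_snoc]; rfl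

lemma trajExp_last {ν : X → ℝ} {q : ℕ → X → X → ℝ} {n : ℕ}
    (hq : ∀ t < n, ∀ a, ∑ b, q t a b = 1) (f : X → ℝ) :
    trajExp ν q n (fun x => f (x (Fin.last n))) = ∑ b, ν b * f b := by
  induction n generalizing ν f with
  | zero =>
    rw [trajExp, ← (Equiv.funUnique (Fin 1) X).symm.sum_comp]
    simp [trajProb]
  | succ n ih =>
    rw [trajExp_succ]
    refine sum_congr rfl fun a _ => ?_
    simp only [Fin.snoc_last]
    rw [ih (fun t ht => hq t (by omega)) fun _ => f a, ← sum_mul, ← mul_sum, hq n (by omega),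
      mul_one]

lemma trajExp_transition {ν : X → ℝ} {q : ℕ → X → X → ℝ} {n : ℕ}
    (hq : ∀ t < n, ∀ a, ∑ b, q t a b = 1) (t : Fin n) (g : X → X → ℝ) :
    trajExp ν q n (fun x => g (x t.succ) (x t.castSucc))
      = trajExp ν q n (fun x => ∑ b, q t (x t.succ) b * g (x t.succ) b) := by
  induction n generalizing ν with
  | zero => exact t.elim0
  | succ n ih =>
    have hq' : ∀ s < n, ∀ a, ∑ b, q s a b = 1 := fun s hs => hq s (by omega)
    rw [trajExp_succ, trajExp_succ]
    refine sum_congr rfl fun a _ => ?_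
    induction t using Fin.lastCases with
    | last =>
      simp only [Fin.succ_last, Fin.snoc_last, Fin.snoc_castSucc, Fin.val_last]
      rw [trajExp_last hq' (g a), trajExp_last hq' fun _ => ∑ b, q n a b * g a b, ← sum_mul,
        ← mul_sum, hq n (by omega), mul_one, mul_sum]
      simp only [mul_assoc]
    | cast s =>
      simp only [Fin.succ_castSucc, Fin.snoc_castSucc, Fin.val_castSucc]
      exact ih hq' s

lemma trajExp_sub (ν : X → ℝ) (q : ℕ → X → X → ℝ) (n : ℕ) (f g : (Fin (n + 1) → X) → ℝ) :
    trajExp ν q n (fun x => f x - g x) = trajExp ν q n f - trajExp ν q n g := by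
  simp only [trajExp, mul_sub, sum_sub_distrib]

lemma trajExp_div_const (ν : X → ℝ) (q : ℕ → X → X → ℝ) (n : ℕ) (f : (Fin (n + 1) → X) → ℝ)
    (c : ℝ) : trajExp ν q n (fun x => f x / c) = trajExp ν q n f / c := by
  simp only [trajExp, mul_div_assoc', sum_div]

theorem KLd_trajProb {ν : X → ℝ} {p q : ℕ → X → X → ℝ} {n : ℕ}
    (hq : ∀ t < n, ∀ a, ∑ b, q t a b = 1) (hp : ∀ t < n, ∀ a b, p t a b ≠ 0) :
    KLd (trajProb ν q n) (trajProb ν p n)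
      = ∑ t : Fin n, trajExp ν q n (fun x => KLd (q t (x t.succ)) (p t (x t.succ))) := by
  have hterm : ∀ x, trajProb ν q n x * Real.log (trajProb ν q n x / trajProb ν p n x)
      = ∑ t : Fin n, trajProb ν q n x *
          Real.log (q t (x t.succ) (x t.castSucc) / p t (x t.succ) (x t.castSucc)) := by
    intro x
    by_cases hx : trajProb ν q n x = 0
    · simp [hx]
    · rw [log_trajProb_div hp hx, mul_sum]
  rw [KLd, sum_congr rfl fun x _ => hterm x, sum_comm]
  exact sum_congr rfl fun t _ =>
    trajExp_transition hq t fun a b => Real.log (q t a b / p t a b)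

end Trajectories

theorem statement1_general {X : Type*} [Fintype X]
    (T : ℕ) (r : X → ℝ) (α : ℝ) (hα : 0 < α)
    (ppre : ℕ → X → X → ℝ) (hprePos : IsPositive T ppre)
    (pθ : ℕ → X → X → ℝ) (hθ : IsPolicy T pθ)
    (μ : X → ℝ) :
    trajExp μ pθ T (fun x => r (x 0))
        - α * ∑ t : Fin T, trajExp μ pθ T (fun x =>
            KLd (fun y => pθ t (x t.succ) y) (fun y => ppre t (x t.succ) y))
      = (∑ x, μ x * softValue ppre r α T x)
        - α * KLd (fun x : Fin (T + 1) → X => trajProb μ pθ T x)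
            (fun x : Fin (T + 1) → X =>
              trajProb μ (fun t x y => softOpt ppre r α t x y) T x) := by
  have hθ1 : ∀ t < T, ∀ a, ∑ b, pθ t a b = 1 := fun t ht a => (hθ t ht a).2
  have hpre0 : ∀ t < T, ∀ a b, ppre t a b ≠ 0 := fun t ht a b => (hprePos t ht a b).ne'
  have hchain := KLd_trajProb (ν := μ) hθ1 hpre0
  have htilt : KLd (trajProb μ pθ T) (trajProb μ (softOpt ppre r α) T)
      = KLd (trajProb μ pθ T) (trajProb μ ppre T)
        - trajExp μ pθ T (fun x => (r (x 0) - softValue ppre r α T (x (Fin.last T))) / α) := by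
    simp only [funext (trajProb_softOpt μ ppre r α T)]
    exact KLd_mul_exp (fun x => trajProb_ne_zero_of_trajProb_ne_zero hpre0) _
  rw [trajExp_div_const, trajExp_sub] at htilt
  rw [← hchain, htilt, ← trajExp_last hθ1]
  field_simp
  ring

/-- the entropy-regularized objective `J(p^θ)` equals
`∑_{x_T} μ(x_T) v_T(x_T) − α · KL(P^{p^θ}_μ ‖ P^{p*}_μ)`, where the last KL
divergence is between the two joint trajectory distributions on `X^{T+1}`. -/
theorem statement1 {X : Type*} [Fintype X] [Nonempty X]
    (T : ℕ) (hT : 1 ≤ T) (r : X → ℝ) (α : ℝ) (hα : 0 < α)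
    (ppre : ℕ → X → X → ℝ) (hpre : IsPolicy T ppre) (hprePos : IsPositive T ppre)
    (pθ : ℕ → X → X → ℝ) (hθ : IsPolicy T pθ) (hθPos : IsPositive T pθ)
    (μ : X → ℝ) (hμ0 : ∀ x, 0 ≤ μ x) (hμ1 : (∑ x, μ x) = 1) :
    trajExp μ pθ T (fun x => r (x 0))
        - α * ∑ t : Fin T, trajExp μ pθ T (fun x =>
            KLd (fun y => pθ t (x t.succ) y) (fun y => ppre t (x t.succ) y))
      = (∑ x, μ x * softValue ppre r α T x)
        - α * KLd (fun x : Fin (T + 1) → X => trajProb μ pθ T x)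
            (fun x : Fin (T + 1) → X =>
              trajProb μ (fun t x y => softOpt ppre r α t x y) T x) :=
  statement1_general T r α hα ppre hprePos pθ hθ μ
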